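/- For all integers a, b ≥ 1 and ℓ ≥ 2, binom(a+b, ℓ) - binom(a, ℓ) - binom(b, ℓ) ≥ (2·a·b / (ℓ·(ℓ-1))) · binom(a+b-2, ℓ-2). -/
import Mathlib

open Finset

lemma term_le (a' b' l k : ℕ) (hk : k ≤ l) :
    2 * (a' + 1) * (b' + 1) * (Nat.choose a' k * Nat.choose b' (l - k)) ≤
      (l + 2) * (l + 1) * (Nat.choose (a' + 1) (k + 1) * Nat.choose (b' + 1) (l + 2 - (k + 1))) := by
  obtain ⟨m, rfl⟩ := Nat.exists_eq_add_of_le hk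
  have h1 : (a' + 1) * Nat.choose a' k = Nat.choose (a' + 1) (k + 1) * (k + 1) :=
    Nat.add_one_mul_choose_eq a' k
  have h2 : (b' + 1) * Nat.choose b' m = Nat.choose (b' + 1) (m + 1) * (m + 1) :=
    Nat.add_one_mul_choose_eq b' m
  have e1 : k + m - k = m := by omega
  have e2 : k + m + 2 - (k + 1) = m + 1 := by omega
  rw [e1, e2]
  calc 2 * (a' + 1) * (b' + 1) * (Nat.choose a' k * Nat.choose b' m)
      = 2 * ((a' + 1) * Nat.choose a' k) * ((b' + 1) * Nat.choose b' m) := by ring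
    _ = 2 * (k + 1) * (m + 1) * (Nat.choose (a' + 1) (k + 1) * Nat.choose (b' + 1) (m + 1)) := by
        rw [h1, h2]; ring
    _ ≤ (k + m + 2) * (k + m + 1) * (Nat.choose (a' + 1) (k + 1) * Nat.choose (b' + 1) (m + 1)) := by
        apply Nat.mul_le_mul_right
        nlinarith [sq_nonneg (k - m), Nat.zero_le k]

lemma key (a' b' l : ℕ) :
    2 * (a' + 1) * (b' + 1) * Nat.choose (a' + b') l +
      (l + 2) * (l + 1) * (Nat.choose (a' + 1) (l + 2) + Nat.choose (b' + 1) (l + 2)) ≤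
      (l + 2) * (l + 1) * Nat.choose ((a' + 1) + (b' + 1)) (l + 2) := by
  have hV1 : Nat.choose ((a' + 1) + (b' + 1)) (l + 2) =
      Nat.choose (b' + 1) (l + 2) + (∑ k ∈ range (l + 1),
        Nat.choose (a' + 1) (k + 1) * Nat.choose (b' + 1) (l + 2 - (k + 1))) +
      Nat.choose (a' + 1) (l + 2) := by
    rw [Nat.add_choose_eq, Finset.Nat.sum_antidiagonal_eq_sum_range_succ_mk,
      Finset.sum_range_succ, Finset.sum_range_succ']
    simp [Nat.choose_zero_right, Nat.sub_self, Nat.choose_self]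
    exact Nat.add_comm _ _
  have hV2 : Nat.choose (a' + b') l =
      ∑ k ∈ range (l + 1), Nat.choose a' k * Nat.choose b' (l - k) := by
    rw [Nat.add_choose_eq, Finset.Nat.sum_antidiagonal_eq_sum_range_succ_mk]
  rw [hV1, hV2]
  have hmain : 2 * (a' + 1) * (b' + 1) * ∑ k ∈ range (l + 1), Nat.choose a' k * Nat.choose b' (l - k)
      ≤ (l + 2) * (l + 1) * ∑ k ∈ range (l + 1),
        Nat.choose (a' + 1) (k + 1) * Nat.choose (b' + 1) (l + 2 - (k + 1)) := by
    rw [Finset.mul_sum, Finset.mul_sum]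
    exact Finset.sum_le_sum fun k hk => term_le a' b' l k (by simpa using Nat.lt_succ_iff.mp (mem_range.mp hk))
  -- goal shape: close with omega/linarith after hmain
  have := hmain
  nlinarith [hmain]

/-- For integers `a, b ≥ 1` and `ℓ ≥ 2`, we have
`C(a+b, ℓ) - C(a, ℓ) - C(b, ℓ) ≥ (2ab / (ℓ(ℓ-1))) · C(a+b-2, ℓ-2)` over the reals. -/
theorem choose_diff_ge (a b ℓ : ℕ) (ha : 1 ≤ a) (hb : 1 ≤ b) (hℓ : 2 ≤ ℓ) :
    (Nat.choose (a + b) ℓ : ℝ) - Nat.choose a ℓ - Nat.choose b ℓ ≥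
      (2 * a * b / (ℓ * (ℓ - 1))) * Nat.choose (a + b - 2) (ℓ - 2) := by
  obtain ⟨a', rfl⟩ := Nat.exists_eq_add_of_le ha
  obtain ⟨b', rfl⟩ := Nat.exists_eq_add_of_le hb
  obtain ⟨l, rfl⟩ := Nat.exists_eq_add_of_le hℓ
  have H := key a' b' l
  have h1 : 1 + a' + (1 + b') - 2 = a' + b' := by omega
  have h2 : 2 + l - 2 = l := by omega
  have h3 : (1 + a' : ℕ) + (1 + b') = (a' + 1) + (b' + 1) := by omega
  rw [h1, h2, h3]
  have hpos : (0 : ℝ) < (2 + l : ℕ) * ((2 + l : ℕ) - 1) := by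
    push_cast; nlinarith [Nat.cast_nonneg (α := ℝ) l]
  rw [ge_iff_le, div_mul_eq_mul_div, div_le_iff₀ hpos]
  have Hc : (2 * (a' + 1) * (b' + 1) * Nat.choose (a' + b') l +
      (l + 2) * (l + 1) * (Nat.choose (a' + 1) (l + 2) + Nat.choose (b' + 1) (l + 2)) : ℝ) ≤
      (l + 2) * (l + 1) * Nat.choose ((a' + 1) + (b' + 1)) (l + 2) := by exact_mod_cast H
  have e1 : (1 + a' : ℕ) = a' + 1 := by omega
  have e2 : (1 + b' : ℕ) = b' + 1 := by omega
  have e3 : (2 + l : ℕ) = l + 2 := by omega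
  rw [e1, e2, e3]
  push_cast at Hc ⊢
  nlinarith [Hc]
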